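/- arXiv:2509.11337 — 7 statements merged into one kernel-verified Lean document; each statement's English description precedes it below -/
import Mathlib

section
/- Let M, d, N be positive integers and let G : ℝ^M × ℝ^d → ℝ^M satisfy, for some constant L ≥ 0 and all w, w₁, w₂ ∈ ℝ^M and x, x₁, x₂ ∈ ℝ^d: ‖G(w₂, x) − G(w₁, x)‖ ≤ L‖w₂ − w₁‖ and ‖G(w, x₂) − G(w, x₁)‖ ≤ L‖x₂ − x₁‖. Let ε ≥ 0, let x₁, …, x_N ∈ ℝ^d be fixed data points, and for each i let δᵢ : ℝ^M → ℝ^d be a map with ‖δᵢ(w)‖ ≤ ε for all w (a selection of adversarial perturbations). Define g(w) = (1/N) Σ_{i=1}^N G(w, xᵢ + δᵢ(w)). Then for all w₁, w₂ ∈ ℝ^M, ‖g(w₂) − g(w₁)‖ ≤ L‖w₂ − w₁‖ + 2Lε. -/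
open scoped BigOperators

/-- Affine Lipschitz property of the empirical adversarial risk gradient
(Lemma 1, second inequality): if `G` is `L`-Lipschitz in each argument and
`δᵢ : ℝ^M → ℝ^d` are perturbation selections bounded by `ε`, then
`g(w) = (1/N) Σᵢ G(w, xᵢ + δᵢ(w))` satisfies
`‖g(w₂) − g(w₁)‖ ≤ L‖w₂ − w₁‖ + 2 L ε`. -/
theorem affine_lipschitz_empirical_risk
    (M d N : ℕ) (hM : 0 < M) (hd : 0 < d) (hN : 0 < N)
    (G : EuclideanSpace ℝ (Fin M) → EuclideanSpace ℝ (Fin d) → EuclideanSpace ℝ (Fin M))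
    (L : ℝ) (hL : 0 ≤ L)
    (hLw : ∀ (w₁ w₂ : EuclideanSpace ℝ (Fin M)) (x : EuclideanSpace ℝ (Fin d)),
      ‖G w₂ x - G w₁ x‖ ≤ L * ‖w₂ - w₁‖)
    (hLx : ∀ (w : EuclideanSpace ℝ (Fin M)) (x₁ x₂ : EuclideanSpace ℝ (Fin d)),
      ‖G w x₂ - G w x₁‖ ≤ L * ‖x₂ - x₁‖)
    (ε : ℝ) (hε : 0 ≤ ε)
    (x : Fin N → EuclideanSpace ℝ (Fin d))
    (δ : Fin N → EuclideanSpace ℝ (Fin M) → EuclideanSpace ℝ (Fin d))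
    (hδ : ∀ (i : Fin N) (w : EuclideanSpace ℝ (Fin M)), ‖δ i w‖ ≤ ε)
    (g : EuclideanSpace ℝ (Fin M) → EuclideanSpace ℝ (Fin M))
    (hg : ∀ w, g w = (N : ℝ)⁻¹ • ∑ i : Fin N, G w (x i + δ i w))
    (w₁ w₂ : EuclideanSpace ℝ (Fin M)) :
    ‖g w₂ - g w₁‖ ≤ L * ‖w₂ - w₁‖ + 2 * L * ε := by
  have hNpos : (0:ℝ) < N := by exact_mod_cast hN
  have key : ∀ i : Fin N,
      ‖G w₂ (x i + δ i w₂) - G w₁ (x i + δ i w₁)‖ ≤ L * ‖w₂ - w₁‖ + 2 * L * ε := by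
    intro i
    have h1 := hLw w₁ w₂ (x i + δ i w₂)
    have h2 := hLx w₁ (x i + δ i w₁) (x i + δ i w₂)
    have hδd : ‖x i + δ i w₂ - (x i + δ i w₁)‖ ≤ 2 * ε := by
      have : x i + δ i w₂ - (x i + δ i w₁) = δ i w₂ - δ i w₁ := by abel
      rw [this]
      calc ‖δ i w₂ - δ i w₁‖ ≤ ‖δ i w₂‖ + ‖δ i w₁‖ := norm_sub_le _ _
        _ ≤ ε + ε := add_le_add (hδ i w₂) (hδ i w₁)
        _ = 2 * ε := by ring
    calc ‖G w₂ (x i + δ i w₂) - G w₁ (x i + δ i w₁)‖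
        ≤ ‖G w₂ (x i + δ i w₂) - G w₁ (x i + δ i w₂)‖
          + ‖G w₁ (x i + δ i w₂) - G w₁ (x i + δ i w₁)‖ := by
          have := norm_sub_le_norm_sub_add_norm_sub (G w₂ (x i + δ i w₂))
            (G w₁ (x i + δ i w₂)) (G w₁ (x i + δ i w₁))
          exact this
      _ ≤ L * ‖w₂ - w₁‖ + L * (2 * ε) :=
          add_le_add h1 (h2.trans (mul_le_mul_of_nonneg_left hδd hL))
      _ = L * ‖w₂ - w₁‖ + 2 * L * ε := by ring
  rw [hg w₁, hg w₂, ← smul_sub, ← Finset.sum_sub_distrib]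
  rw [norm_smul]
  have hsum : ‖∑ i : Fin N, (G w₂ (x i + δ i w₂) - G w₁ (x i + δ i w₁))‖
      ≤ (N : ℝ) * (L * ‖w₂ - w₁‖ + 2 * L * ε) := by
    calc ‖∑ i : Fin N, (G w₂ (x i + δ i w₂) - G w₁ (x i + δ i w₁))‖
        ≤ ∑ i : Fin N, ‖G w₂ (x i + δ i w₂) - G w₁ (x i + δ i w₁)‖ :=
          norm_sum_le _ _
      _ ≤ ∑ _i : Fin N, (L * ‖w₂ - w₁‖ + 2 * L * ε) := Finset.sum_le_sum (fun i _ => key i)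
      _ = (N : ℝ) * (L * ‖w₂ - w₁‖ + 2 * L * ε) := by
          simp [Finset.sum_const, mul_comm]; ring
  have : ‖((N:ℝ)⁻¹)‖ = (N:ℝ)⁻¹ := by
    rw [Real.norm_eq_abs, abs_of_nonneg (by positivity)]
  rw [this]
  calc (N:ℝ)⁻¹ * ‖∑ i : Fin N, (G w₂ (x i + δ i w₂) - G w₁ (x i + δ i w₁))‖
      ≤ (N:ℝ)⁻¹ * ((N : ℝ) * (L * ‖w₂ - w₁‖ + 2 * L * ε)) := by
        exact mul_le_mul_of_nonneg_left hsum (by positivity)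
    _ = L * ‖w₂ - w₁‖ + 2 * L * ε := by field_simp
end

section
/- Let s₁, …, s_B : Ω → ℝ^M be independent and identically distributed random vectors with mean zero and 𝔼‖s₁‖⁴ < ∞. Then 𝔼‖(1/B) Σ_{b=1}^B s_b‖⁴ ≤ (3/B²) 𝔼‖s₁‖⁴. -/
open MeasureTheory ProbabilityTheory
open scoped BigOperators InnerProductSpace ENNReal

set_option linter.unusedSectionVars false
set_option linter.unusedVariables false
set_option linter.unusedTactic false

section Aux

variable {Ω : Type*} [MeasureSpace Ω] [IsProbabilityMeasure (volume : Measure Ω)] {M : ℕ}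

local notation "E'" => EuclideanSpace ℝ (Fin M)

lemma coord_abs_le_norm (x : EuclideanSpace ℝ (Fin M)) (i : Fin M) : |x i| ≤ ‖x‖ := by
  rw [EuclideanSpace.norm_eq]
  rw [show |x i| = Real.sqrt (‖x i‖^2) by
    rw [Real.sqrt_sq (norm_nonneg _)]; simp [Real.norm_eq_abs]]
  exact Real.sqrt_le_sqrt (Finset.single_le_sum (f := fun j => ‖x j‖^2)
    (fun j _ => by positivity) (Finset.mem_univ i))

lemma measurable_coord (i : Fin M) : Measurable (fun x : E' => x i) :=
  (EuclideanSpace.proj (𝕜 := ℝ) i).measurable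

/-- Key vanishing lemma: `𝔼[g(X) ⟪X, Y⟫] = 0` when `X ⊥ Y` and `𝔼 Y = 0`. -/
lemma integral_mul_inner_eq_zero {X Y : Ω → E'} (hX : Measurable X) (hY : Measurable Y)
    (hXY : IndepFun X Y) {g : E' → ℝ} (hg : Measurable g)
    (hgX : Integrable (fun ω => |g (X ω)| * ‖X ω‖)) (hYint : Integrable Y)
    (hY0 : (∫ ω, Y ω) = 0) :
    ∫ ω, g (X ω) * ⟪X ω, Y ω⟫_ℝ = 0 := by
  have hprod : Integrable (fun ω => |g (X ω)| * ‖X ω‖ * ‖Y ω‖) := by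
    have := (hXY.comp ((hg.abs.mul measurable_norm) :
        Measurable (fun v : E' => |g v| * ‖v‖)) (measurable_norm : Measurable (fun v : E' => ‖v‖))).integrable_mul
      hgX hYint.norm
    exact this
  have hterm : ∀ i : Fin M, Integrable (fun ω => (g (X ω) * X ω i) * Y ω i) := by
    intro i
    refine hprod.mono' ?_ ?_
    · exact (((hg.comp hX).mul ((measurable_coord i).comp hX)).mul
        ((measurable_coord i).comp hY)).aestronglyMeasurable
    · filter_upwards with ω
      have h1 : |X ω i| ≤ ‖X ω‖ := coord_abs_le_norm _ _
      have h2 : |Y ω i| ≤ ‖Y ω‖ := coord_abs_le_norm _ _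
      have : ‖g (X ω) * X ω i * Y ω i‖ = |g (X ω)| * |X ω i| * |Y ω i| := by
        simp [Real.norm_eq_abs, abs_mul]
      rw [this]
      exact mul_le_mul (mul_le_mul le_rfl h1 (abs_nonneg _) (abs_nonneg _)) h2
        (abs_nonneg _) (by positivity)
  calc ∫ ω, g (X ω) * ⟪X ω, Y ω⟫_ℝ
      = ∫ ω, ∑ i : Fin M, (g (X ω) * X ω i) * Y ω i := by
        congr 1; funext ω
        rw [PiLp.inner_apply]
        simp only [RCLike.inner_apply, starRingEnd_apply, star_trivial]
        rw [Finset.mul_sum]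
        congr 1; funext i; ring
    _ = ∑ i : Fin M, ∫ ω, (g (X ω) * X ω i) * Y ω i :=
        integral_finset_sum _ (fun i _ => hterm i)
    _ = ∑ i : Fin M, (∫ ω, g (X ω) * X ω i) * (∫ ω, Y ω i) := by
        refine Finset.sum_congr rfl (fun i _ => ?_)
        exact IndepFun.integral_fun_mul_eq_mul_integral
          (hXY.comp ((hg.mul (measurable_coord i)) :
            Measurable (fun v : E' => g v * v i)) (measurable_coord i))
          ((hg.comp hX).mul ((measurable_coord i).comp hX)).aestronglyMeasurable
          ((measurable_coord i).comp hY).aestronglyMeasurable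
    _ = 0 := by
        refine Finset.sum_eq_zero (fun i _ => ?_)
        have : (∫ ω, Y ω i) = (EuclideanSpace.proj (𝕜 := ℝ) i) (∫ ω, Y ω) := by
          rw [← ContinuousLinearMap.integral_comp_comm _ hYint]
          rfl
        rw [this, hY0, map_zero, mul_zero]


lemma integrable_norm_pow_of_memL4 {X : Ω → E'} (h : MemLp X 4) {n : ℕ} (hn0 : 0 < n)
    (hn : n ≤ 4) : Integrable (fun ω => ‖X ω‖ ^ n) := by
  have h' : MemLp X n := h.mono_exponent (by exact_mod_cast hn)
  have := h'.integrable_norm_rpow (by exact_mod_cast hn0.ne') (by simp)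
  simpa [Real.rpow_natCast] using this

lemma integrable_norm_pow_mul {X Y : Ω → E'} (hX : Measurable X) (hY : Measurable Y)
    (hXY : IndepFun X Y) (h4X : MemLp X 4) (h4Y : MemLp Y 4) {a b : ℕ}
    (ha0 : 0 < a) (ha : a ≤ 4) (hb0 : 0 < b) (hb : b ≤ 4) :
    Integrable (fun ω => ‖X ω‖ ^ a * ‖Y ω‖ ^ b) := by
  exact (hXY.comp ((measurable_norm.pow_const a) : Measurable (fun v : E' => ‖v‖ ^ a))
      ((measurable_norm.pow_const b) : Measurable (fun v : E' => ‖v‖ ^ b))).integrable_mul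
    (integrable_norm_pow_of_memL4 h4X ha0 ha) (integrable_norm_pow_of_memL4 h4Y hb0 hb)


lemma step_snd_moment {X Y : Ω → E'} (hX : Measurable X) (hY : Measurable Y)
    (hXY : IndepFun X Y) (h4X : MemLp X 4) (h4Y : MemLp Y 4)
    (hY0 : (∫ ω, Y ω) = 0) :
    ∫ ω, ‖X ω + Y ω‖ ^ 2 = (∫ ω, ‖X ω‖ ^ 2) + ∫ ω, ‖Y ω‖ ^ 2 := by
  have iX2 := integrable_norm_pow_of_memL4 h4X (by norm_num) (by norm_num : 2 ≤ 4)
  have iY2 := integrable_norm_pow_of_memL4 h4Y (by norm_num) (by norm_num : 2 ≤ 4)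
  have iXY11 := integrable_norm_pow_mul hX hY hXY h4X h4Y
    (by norm_num) (by norm_num : 1 ≤ 4) (by norm_num) (by norm_num : 1 ≤ 4)
  have hbmeas : Measurable (fun ω => ⟪X ω, Y ω⟫_ℝ) := hX.inner hY
  have ib : Integrable (fun ω => ⟪X ω, Y ω⟫_ℝ) := by
    refine iXY11.mono' hbmeas.aestronglyMeasurable ?_
    filter_upwards with ω
    simpa using abs_real_inner_le_norm (X ω) (Y ω)
  have hinner0 : ∫ ω, ⟪X ω, Y ω⟫_ℝ = 0 := by
    have := integral_mul_inner_eq_zero hX hY hXY (g := fun _ => 1) measurable_const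
      (by simpa using (h4X.integrable (by norm_num)).norm)
      (h4Y.integrable (by norm_num)) hY0
    simpa using this
  have hpt : ∀ ω, ‖X ω + Y ω‖ ^ 2 = ‖X ω‖ ^ 2 + 2 * ⟪X ω, Y ω⟫_ℝ + ‖Y ω‖ ^ 2 :=
    fun ω => norm_add_sq_real (X ω) (Y ω)
  calc ∫ ω, ‖X ω + Y ω‖ ^ 2
      = ∫ ω, (‖X ω‖ ^ 2 + 2 * ⟪X ω, Y ω⟫_ℝ + ‖Y ω‖ ^ 2) :=
        integral_congr_ae (Filter.Eventually.of_forall hpt)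
    _ = (∫ ω, ‖X ω‖ ^ 2) + 2 * (∫ ω, ⟪X ω, Y ω⟫_ℝ) + ∫ ω, ‖Y ω‖ ^ 2 := by
        have h1 : Integrable (fun ω => ‖X ω‖ ^ 2 + 2 * ⟪X ω, Y ω⟫_ℝ) := by
          exact iX2.add (ib.const_mul 2)
        simp only [integral_add h1 iY2, integral_add iX2 (ib.const_mul 2),
          integral_const_mul _ _]
    _ = (∫ ω, ‖X ω‖ ^ 2) + ∫ ω, ‖Y ω‖ ^ 2 := by rw [hinner0]; ring

lemma step_fourth_moment {X Y : Ω → E'} (hX : Measurable X) (hY : Measurable Y)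
    (hXY : IndepFun X Y) (h4X : MemLp X 4) (h4Y : MemLp Y 4)
    (hX0 : (∫ ω, X ω) = 0) (hY0 : (∫ ω, Y ω) = 0) :
    ∫ ω, ‖X ω + Y ω‖ ^ 4
      ≤ (∫ ω, ‖X ω‖ ^ 4) + 6 * (∫ ω, ‖X ω‖ ^ 2) * (∫ ω, ‖Y ω‖ ^ 2)
        + ∫ ω, ‖Y ω‖ ^ 4 := by
  have iX4 := integrable_norm_pow_of_memL4 h4X (by norm_num) (le_refl 4)
  have iY4 := integrable_norm_pow_of_memL4 h4Y (by norm_num) (le_refl 4)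
  have iX2 := integrable_norm_pow_of_memL4 h4X (by norm_num) (by norm_num : 2 ≤ 4)
  have iY2 := integrable_norm_pow_of_memL4 h4Y (by norm_num) (by norm_num : 2 ≤ 4)
  have iX3 := integrable_norm_pow_of_memL4 h4X (by norm_num) (by norm_num : 3 ≤ 4)
  have iXY22 := integrable_norm_pow_mul hX hY hXY h4X h4Y
    (by norm_num) (by norm_num : 2 ≤ 4) (by norm_num) (by norm_num : 2 ≤ 4)
  have iXY31 := integrable_norm_pow_mul hX hY hXY h4X h4Y
    (by norm_num) (by norm_num : 3 ≤ 4) (by norm_num) (by norm_num : 1 ≤ 4)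
  have iXY13 := integrable_norm_pow_mul hX hY hXY h4X h4Y
    (by norm_num) (by norm_num : 1 ≤ 4) (by norm_num) (by norm_num : 3 ≤ 4)
  have hbmeas : Measurable (fun ω => ⟪X ω, Y ω⟫_ℝ) := hX.inner hY
  have habs : ∀ ω, |⟪X ω, Y ω⟫_ℝ| ≤ ‖X ω‖ * ‖Y ω‖ := fun ω => abs_real_inner_le_norm _ _
  have ib2 : Integrable (fun ω => ⟪X ω, Y ω⟫_ℝ ^ 2) := by
    refine iXY22.mono' (hbmeas.pow_const 2).aestronglyMeasurable ?_
    filter_upwards with ω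
    calc ‖⟪X ω, Y ω⟫_ℝ ^ 2‖ = |⟪X ω, Y ω⟫_ℝ| ^ 2 := by
          rw [Real.norm_eq_abs, abs_pow]
      _ ≤ (‖X ω‖ * ‖Y ω‖) ^ 2 := pow_le_pow_left₀ (abs_nonneg _) (habs ω) 2
      _ = ‖X ω‖ ^ 2 * ‖Y ω‖ ^ 2 := by ring
  have iab : Integrable (fun ω => ‖X ω‖ ^ 2 * ⟪X ω, Y ω⟫_ℝ) := by
    refine iXY31.mono' ((measurable_norm.comp hX).pow_const 2 |>.mul hbmeas).aestronglyMeasurable ?_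
    filter_upwards with ω
    have : ‖X ω‖ ^ 2 * |⟪X ω, Y ω⟫_ℝ| ≤ ‖X ω‖ ^ 2 * (‖X ω‖ * ‖Y ω‖) :=
      mul_le_mul_of_nonneg_left (habs ω) (by positivity)
    calc ‖‖X ω‖ ^ 2 * ⟪X ω, Y ω⟫_ℝ‖ = ‖X ω‖ ^ 2 * |⟪X ω, Y ω⟫_ℝ| := by
          simp [Real.norm_eq_abs, abs_mul, abs_pow, abs_norm]
      _ ≤ ‖X ω‖ ^ 2 * (‖X ω‖ * ‖Y ω‖) := this
      _ = ‖X ω‖ ^ 3 * ‖Y ω‖ ^ 1 := by ring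
  have ibc : Integrable (fun ω => ⟪X ω, Y ω⟫_ℝ * ‖Y ω‖ ^ 2) := by
    refine iXY13.mono' (hbmeas.mul ((measurable_norm.comp hY).pow_const 2)).aestronglyMeasurable ?_
    filter_upwards with ω
    have : |⟪X ω, Y ω⟫_ℝ| * ‖Y ω‖ ^ 2 ≤ (‖X ω‖ * ‖Y ω‖) * ‖Y ω‖ ^ 2 :=
      mul_le_mul_of_nonneg_right (habs ω) (by positivity)
    calc ‖⟪X ω, Y ω⟫_ℝ * ‖Y ω‖ ^ 2‖ = |⟪X ω, Y ω⟫_ℝ| * ‖Y ω‖ ^ 2 := by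
          simp [Real.norm_eq_abs, abs_mul, abs_pow, abs_norm]
      _ ≤ (‖X ω‖ * ‖Y ω‖) * ‖Y ω‖ ^ 2 := this
      _ = ‖X ω‖ ^ 1 * ‖Y ω‖ ^ 3 := by ring
  -- vanishing cross terms
  have hz1 : ∫ ω, ‖X ω‖ ^ 2 * ⟪X ω, Y ω⟫_ℝ = 0 := by
    refine integral_mul_inner_eq_zero hX hY hXY (g := fun v => ‖v‖ ^ 2)
      (measurable_norm.pow_const 2) ?_ (h4Y.integrable (by norm_num)) hY0
    have : (fun ω => |‖X ω‖ ^ 2| * ‖X ω‖) = fun ω => ‖X ω‖ ^ 3 := by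
      funext ω; rw [abs_of_nonneg (sq_nonneg _)]; ring
    rw [this]; exact iX3
  have hz2 : ∫ ω, ⟪X ω, Y ω⟫_ℝ * ‖Y ω‖ ^ 2 = 0 := by
    have hcomm : (fun ω => ⟪X ω, Y ω⟫_ℝ * ‖Y ω‖ ^ 2)
        = fun ω => (‖Y ω‖ ^ 2) * ⟪Y ω, X ω⟫_ℝ := by
      funext ω; rw [real_inner_comm]; ring
    rw [hcomm]
    refine integral_mul_inner_eq_zero hY hX hXY.symm (g := fun v => ‖v‖ ^ 2)
      (measurable_norm.pow_const 2) ?_ (h4X.integrable (by norm_num)) hX0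
    have : (fun ω => |‖Y ω‖ ^ 2| * ‖Y ω‖) = fun ω => ‖Y ω‖ ^ 3 := by
      funext ω; rw [abs_of_nonneg (sq_nonneg _)]; ring
    rw [this]
    exact integrable_norm_pow_of_memL4 h4Y (by norm_num) (by norm_num)
  -- product of squared norms
  have hm : ∫ ω, ‖X ω‖ ^ 2 * ‖Y ω‖ ^ 2 = (∫ ω, ‖X ω‖ ^ 2) * ∫ ω, ‖Y ω‖ ^ 2 :=
    IndepFun.integral_fun_mul_eq_mul_integral
      (hXY.comp ((measurable_norm.pow_const 2) : Measurable (fun v : E' => ‖v‖ ^ 2))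
        ((measurable_norm.pow_const 2) : Measurable (fun v : E' => ‖v‖ ^ 2)))
      ((measurable_norm.comp hX).pow_const 2).aestronglyMeasurable
      ((measurable_norm.comp hY).pow_const 2).aestronglyMeasurable
  have hb2le : (∫ ω, ⟪X ω, Y ω⟫_ℝ ^ 2) ≤ ∫ ω, ‖X ω‖ ^ 2 * ‖Y ω‖ ^ 2 := by
    refine integral_mono ib2 iXY22 (fun ω => ?_)
    rw [← sq_abs]
    calc |⟪X ω, Y ω⟫_ℝ| ^ 2 ≤ (‖X ω‖ * ‖Y ω‖) ^ 2 :=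
          pow_le_pow_left₀ (abs_nonneg _) (habs ω) 2
      _ = ‖X ω‖ ^ 2 * ‖Y ω‖ ^ 2 := by ring
  have hpt : ∀ ω, ‖X ω + Y ω‖ ^ 4
      = ‖X ω‖ ^ 4 + ‖Y ω‖ ^ 4 + 4 * ⟪X ω, Y ω⟫_ℝ ^ 2
        + 4 * (‖X ω‖ ^ 2 * ⟪X ω, Y ω⟫_ℝ) + 2 * (‖X ω‖ ^ 2 * ‖Y ω‖ ^ 2)
        + 4 * (⟪X ω, Y ω⟫_ℝ * ‖Y ω‖ ^ 2) := by
    intro ω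
    have h2 : ‖X ω + Y ω‖ ^ 2 = ‖X ω‖ ^ 2 + 2 * ⟪X ω, Y ω⟫_ℝ + ‖Y ω‖ ^ 2 :=
      norm_add_sq_real (X ω) (Y ω)
    have h4 : ‖X ω + Y ω‖ ^ 4 = (‖X ω + Y ω‖ ^ 2) ^ 2 := by ring
    rw [h4, h2]; ring
  have hsplit : ∫ ω, ‖X ω + Y ω‖ ^ 4
      = (∫ ω, ‖X ω‖ ^ 4) + (∫ ω, ‖Y ω‖ ^ 4) + 4 * (∫ ω, ⟪X ω, Y ω⟫_ℝ ^ 2)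
        + 4 * (∫ ω, ‖X ω‖ ^ 2 * ⟪X ω, Y ω⟫_ℝ)
        + 2 * (∫ ω, ‖X ω‖ ^ 2 * ‖Y ω‖ ^ 2)
        + 4 * (∫ ω, ⟪X ω, Y ω⟫_ℝ * ‖Y ω‖ ^ 2) := by
    rw [integral_congr_ae (Filter.Eventually.of_forall hpt)]
    have j1 : Integrable (fun ω => ‖X ω‖ ^ 4 + ‖Y ω‖ ^ 4) := by exact iX4.add iY4
    have j2 : Integrable (fun ω => ‖X ω‖ ^ 4 + ‖Y ω‖ ^ 4 + 4 * ⟪X ω, Y ω⟫_ℝ ^ 2) := by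
      exact j1.add (ib2.const_mul 4)
    have j3 : Integrable (fun ω => ‖X ω‖ ^ 4 + ‖Y ω‖ ^ 4 + 4 * ⟪X ω, Y ω⟫_ℝ ^ 2
        + 4 * (‖X ω‖ ^ 2 * ⟪X ω, Y ω⟫_ℝ)) := by exact j2.add (iab.const_mul 4)
    have j4 : Integrable (fun ω => ‖X ω‖ ^ 4 + ‖Y ω‖ ^ 4 + 4 * ⟪X ω, Y ω⟫_ℝ ^ 2
        + 4 * (‖X ω‖ ^ 2 * ⟪X ω, Y ω⟫_ℝ) + 2 * (‖X ω‖ ^ 2 * ‖Y ω‖ ^ 2)) := by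
      exact j3.add (iXY22.const_mul 2)
    simp only [integral_add j4 (ibc.const_mul 4), integral_add j3 (iXY22.const_mul 2),
      integral_add j2 (iab.const_mul 4), integral_add j1 (ib2.const_mul 4),
      integral_add iX4 iY4, integral_const_mul _ _]
  rw [hsplit, hz1, hz2, hm]
  rw [hm] at hb2le
  nlinarith [hb2le]

end Aux

set_option maxHeartbeats 1000000 in
/-- Inverse-square batch-size scaling of the fourth moment of the mini-batch
gradient noise (Lemma 2): for i.i.d. mean-zero random vectors `s₁, …, s_B` with
finite fourth moment, `𝔼‖(1/B) Σ_b s_b‖⁴ ≤ (3/B²) 𝔼‖s₁‖⁴`. -/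
theorem minibatch_fourth_moment_scaling
    {Ω : Type*} [MeasureSpace Ω] [IsProbabilityMeasure (volume : Measure Ω)]
    (M B : ℕ) (hM : 0 < M) (hB : 0 < B)
    (s : Fin B → Ω → EuclideanSpace ℝ (Fin M))
    (hmeas : ∀ b, Measurable (s b))
    (hindep : ProbabilityTheory.iIndepFun s)
    (hident : ∀ b : Fin B, ProbabilityTheory.IdentDistrib (s b) (s ⟨0, hB⟩))
    (hmean : ∀ b, (∫ ω, s b ω) = 0)
    (hL4 : MemLp (s ⟨0, hB⟩) 4) :
    ∫ ω, ‖(B : ℝ)⁻¹ • ∑ b : Fin B, s b ω‖ ^ 4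
      ≤ 3 / (B : ℝ) ^ 2 * ∫ ω, ‖s ⟨0, hB⟩ ω‖ ^ 4 := by
  classical
  set μ4 : ℝ := ∫ ω, ‖s ⟨0, hB⟩ ω‖ ^ 4 with hμ4def
  set μ2 : ℝ := ∫ ω, ‖s ⟨0, hB⟩ ω‖ ^ 2 with hμ2def
  have hL4b : ∀ b, MemLp (s b) 4 := fun b => (hident b).symm.memLp_snd hL4
  have hm4b : ∀ b, (∫ ω, ‖s b ω‖ ^ 4) = μ4 := fun b =>
    ((hident b).comp (measurable_norm.pow_const 4)).integral_eq
  have hm2b : ∀ b, (∫ ω, ‖s b ω‖ ^ 2) = μ2 := fun b =>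
    ((hident b).comp (measurable_norm.pow_const 2)).integral_eq
  -- partial sums
  set t : ℕ → Finset (Fin B) := fun k => Finset.univ.filter (fun b : Fin B => (b : ℕ) < k)
    with htdef
  set T : ℕ → Ω → EuclideanSpace ℝ (Fin M) := fun k ω => ∑ b ∈ t k, s b ω with hTdef
  have hTmeas : ∀ k, Measurable (T k) := fun k =>
    Finset.measurable_sum _ (fun b _ => hmeas b)
  have hTL4 : ∀ k, MemLp (T k) 4 := fun k =>
    memLp_finset_sum _ (fun b _ => hL4b b)
  have hT0 : ∀ k, (∫ ω, T k ω) = 0 := by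
    intro k
    have : (∫ ω, T k ω) = ∑ b ∈ t k, ∫ ω, s b ω :=
      integral_finset_sum _ (fun b _ => (hL4b b).integrable (by norm_num))
    rw [this]
    exact Finset.sum_eq_zero (fun b _ => hmean b)
  have hstep : ∀ k, ∀ hk : k < B, ∀ ω, T (k + 1) ω = T k ω + s ⟨k, hk⟩ ω := by
    intro k hk ω
    have hins : t (k + 1) = insert ⟨k, hk⟩ (t k) := by
      ext b
      simp only [htdef, Finset.mem_filter, Finset.mem_univ, true_and, Finset.mem_insert]
      constructor
      · intro hb
        rcases Nat.lt_succ_iff_lt_or_eq.mp hb with h | h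
        · exact Or.inr h
        · exact Or.inl (Fin.ext h)
      · rintro (rfl | h)
        · exact Nat.lt_succ_self k
        · exact Nat.lt_succ_of_lt h
    have hnot : (⟨k, hk⟩ : Fin B) ∉ t k := by
      simp [htdef]
    simp only [hTdef]
    rw [hins, Finset.sum_insert hnot]
    exact add_comm _ _
  have hTind : ∀ k, ∀ hk : k < B, IndepFun (T k) (s ⟨k, hk⟩) := by
    intro k hk
    have hnot : (⟨k, hk⟩ : Fin B) ∉ t k := by simp [htdef]
    have h := hindep.indepFun_finsetSum_of_notMem hmeas hnot
    have he : T k = (∑ j ∈ t k, s j) := by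
      funext ω; rw [Finset.sum_apply]
    rw [he]
    exact h
  -- the key induction
  have key : ∀ k, k ≤ B →
      (∫ ω, ‖T k ω‖ ^ 2) = (k : ℝ) * μ2 ∧
      (∫ ω, ‖T k ω‖ ^ 4) ≤ (k : ℝ) * μ4 + 3 * ((k * (k - 1) : ℕ) : ℝ) * μ2 ^ 2 := by
    intro k
    induction k with
    | zero =>
      intro _
      have hz : ∀ ω, T 0 ω = 0 := by
        intro ω; simp [hTdef, htdef]
      constructor
      · rw [show (∫ ω, ‖T 0 ω‖ ^ 2) = ∫ ω, (0:ℝ) from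
          integral_congr_ae (Filter.Eventually.of_forall (fun ω => by simp [hz ω]))]
        simp
      · rw [show (∫ ω, ‖T 0 ω‖ ^ 4) = ∫ ω, (0:ℝ) from
          integral_congr_ae (Filter.Eventually.of_forall (fun ω => by simp [hz ω]))]
        simp
    | succ k ih =>
      intro hk1
      have hk : k < B := hk1
      obtain ⟨IH2, IH4⟩ := ih (Nat.le_of_lt hk)
      have hcong2 : (∫ ω, ‖T (k + 1) ω‖ ^ 2) = ∫ ω, ‖T k ω + s ⟨k, hk⟩ ω‖ ^ 2 := by
        refine integral_congr_ae (Filter.Eventually.of_forall (fun ω => ?_))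
        simp only [hstep k hk ω]
      have hcong4 : (∫ ω, ‖T (k + 1) ω‖ ^ 4) = ∫ ω, ‖T k ω + s ⟨k, hk⟩ ω‖ ^ 4 := by
        refine integral_congr_ae (Filter.Eventually.of_forall (fun ω => ?_))
        simp only [hstep k hk ω]
      have h2 := step_snd_moment (hTmeas k) (hmeas ⟨k, hk⟩) (hTind k hk) (hTL4 k)
        (hL4b ⟨k, hk⟩) (hmean ⟨k, hk⟩)
      have h4 := step_fourth_moment (hTmeas k) (hmeas ⟨k, hk⟩) (hTind k hk) (hTL4 k)
        (hL4b ⟨k, hk⟩) (hT0 k) (hmean ⟨k, hk⟩)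
      constructor
      · rw [hcong2, h2, IH2, hm2b]
        push_cast
        ring
      · rw [hcong4]
        refine h4.trans ?_
        rw [IH2, hm2b, hm4b]
        have hμ2sq : (0:ℝ) ≤ μ2 ^ 2 := sq_nonneg _
        have hnat : 3 * ((k * (k - 1) : ℕ) : ℝ) + 6 * (k : ℝ)
            = 3 * (((k + 1) * ((k + 1) - 1) : ℕ) : ℝ) := by
          rcases k with _ | m
          · norm_num
          · push_cast [Nat.succ_sub_one]
            ring
        have : (∫ ω, ‖T k ω‖ ^ 4) + 6 * ((k : ℝ) * μ2) * μ2 + μ4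
            ≤ ((k : ℝ) * μ4 + 3 * ((k * (k - 1) : ℕ) : ℝ) * μ2 ^ 2)
              + 6 * ((k : ℝ) * μ2) * μ2 + μ4 := by linarith
        refine this.trans (le_of_eq ?_)
        push_cast [Nat.succ_sub_one] at hnat ⊢
        nlinarith [hnat]
  -- Jensen: μ2 ^ 2 ≤ μ4
  have hμ4nn : (0:ℝ) ≤ μ4 := by
    rw [hμ4def]; positivity
  have hX2 : MemLp (fun ω => ‖s ⟨0, hB⟩ ω‖ ^ 2) 2 := by
    have h := hL4.norm_rpow_div 2
    have e1 : (4 : ℝ≥0∞) / 2 = 2 :=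
      ((ENNReal.eq_div_iff (by norm_num) (by norm_num)).mpr (by norm_num)).symm
    rw [e1] at h
    have e2 : (fun x => ‖s ⟨0, hB⟩ x‖ ^ ((2:ℝ≥0∞)).toReal)
        = fun x => ‖s ⟨0, hB⟩ x‖ ^ (2:ℕ) := by
      funext x
      rw [show ((2:ℝ≥0∞)).toReal = ((2:ℕ):ℝ) by simp]
      rw [Real.rpow_natCast]
    rwa [e2] at h
  have hJ : μ2 ^ 2 ≤ μ4 := by
    have hvar := variance_nonneg (fun ω => ‖s ⟨0, hB⟩ ω‖ ^ 2) volume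
    rw [variance_eq_sub hX2] at hvar
    have he : (∫ ω, ((fun ω => ‖s ⟨0, hB⟩ ω‖ ^ 2) ^ 2) ω) = μ4 := by
      rw [hμ4def]
      refine integral_congr_ae (Filter.Eventually.of_forall (fun ω => ?_))
      simp [Pi.pow_apply]
      ring
    rw [he] at hvar
    linarith
  -- final computation
  have hTB : ∀ ω, (∑ b : Fin B, s b ω) = T B ω := by
    intro ω
    simp only [hTdef, htdef]
    refine (Finset.sum_congr ?_ (fun _ _ => rfl)).symm
    ext b
    simp [b.isLt]
  have hx0 : (0:ℝ) < (B:ℝ) := by exact_mod_cast hB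
  have hx1 : (1:ℝ) ≤ (B:ℝ) := by exact_mod_cast hB
  have hLHS : (∫ ω, ‖(B : ℝ)⁻¹ • ∑ b : Fin B, s b ω‖ ^ 4)
      = ((B:ℝ) ^ 4)⁻¹ * ∫ ω, ‖T B ω‖ ^ 4 := by
    rw [← integral_const_mul]
    refine integral_congr_ae (Filter.Eventually.of_forall (fun ω => ?_))
    simp only [hTB ω, norm_smul, norm_inv, Real.norm_natCast]
    rw [mul_pow, inv_pow]
  rw [hLHS]
  have hkey := (key B le_rfl).2
  have hcast : ((B * (B - 1) : ℕ) : ℝ) = (B:ℝ) * ((B:ℝ) - 1) := by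
    push_cast [Nat.cast_sub hB]
    ring
  rw [hcast] at hkey
  calc ((B:ℝ) ^ 4)⁻¹ * ∫ ω, ‖T B ω‖ ^ 4
      ≤ ((B:ℝ) ^ 4)⁻¹ * ((B:ℝ) * μ4 + 3 * ((B:ℝ) * ((B:ℝ) - 1)) * μ2 ^ 2) := by
        exact mul_le_mul_of_nonneg_left hkey (by positivity)
    _ ≤ 3 / (B : ℝ) ^ 2 * μ4 := by
        rw [inv_mul_le_iff₀ (by positivity)]
        have he : (B:ℝ) ^ 4 * (3 / (B:ℝ) ^ 2 * μ4) = 3 * (B:ℝ) ^ 2 * μ4 := by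
          field_simp
        rw [he]
        have h1 : (0:ℝ) ≤ 3 * ((B:ℝ) * ((B:ℝ) - 1)) := by nlinarith
        nlinarith [mul_le_mul_of_nonneg_left hJ h1, mul_nonneg hx0.le hμ4nn]
end

section
/- Let a, b : Ω → ℝ^M be random vectors with 𝔼‖a‖⁴ < ∞ and 𝔼‖b‖⁴ < ∞, and suppose 𝔼[‖a‖² ⟨a, b⟩] = 0 (as holds when b has zero conditional mean given a σ-algebra with respect to which a is measurable). Then 𝔼‖a + b‖⁴ ≤ 𝔼‖a‖⁴ + 3𝔼‖b‖⁴ + 8𝔼[‖a‖² ‖b‖²]. -/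
open MeasureTheory
open scoped ENNReal

lemma norm_pow4_integrable {Ω : Type*} [MeasureSpace Ω]
    [IsProbabilityMeasure (volume : Measure Ω)] {M : ℕ}
    {f : Ω → EuclideanSpace ℝ (Fin M)} (hf : MemLp f 4) :
    Integrable (fun ω => ‖f ω‖ ^ 4) := by
  have h := hf.integrable_norm_rpow (by norm_num) (by norm_num)
  have h2 : (fun x => ‖f x‖ ^ ((4 : ℝ≥0∞).toReal)) = fun x => ‖f x‖ ^ (4 : ℕ) := by
    funext x
    rw [show ((4 : ℝ≥0∞).toReal) = ((4 : ℕ) : ℝ) by norm_num, Real.rpow_natCast]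
  rwa [h2] at h

/-- Expectation version of the fourth-power expansion inequality (Appendix C):
if `𝔼[‖a‖²⟨a, b⟩] = 0` then
`𝔼‖a + b‖⁴ ≤ 𝔼‖a‖⁴ + 3𝔼‖b‖⁴ + 8𝔼[‖a‖²‖b‖²]`. -/
theorem expected_norm_add_pow_four_le
    {Ω : Type*} [MeasureSpace Ω] [IsProbabilityMeasure (volume : Measure Ω)]
    (M : ℕ) (a b : Ω → EuclideanSpace ℝ (Fin M))
    (ha : MemLp a 4) (hb : MemLp b 4)
    (hcross : ∫ ω, ‖a ω‖ ^ 2 * (inner ℝ (a ω) (b ω) : ℝ) = 0) :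
    ∫ ω, ‖a ω + b ω‖ ^ 4
      ≤ (∫ ω, ‖a ω‖ ^ 4) + 3 * (∫ ω, ‖b ω‖ ^ 4) + 8 * ∫ ω, ‖a ω‖ ^ 2 * ‖b ω‖ ^ 2 := by
  have hia : Integrable (fun ω => ‖a ω‖ ^ 4) := norm_pow4_integrable ha
  have hib : Integrable (fun ω => ‖b ω‖ ^ 4) := norm_pow4_integrable hb
  -- measurability
  have hma : AEStronglyMeasurable a volume := ha.aestronglyMeasurable
  have hmb : AEStronglyMeasurable b volume := hb.aestronglyMeasurable
  have hmab : AEStronglyMeasurable (fun ω => ‖a ω‖ ^ 2 * ‖b ω‖ ^ 2) volume :=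
    ((hma.norm.pow 2).mul (hmb.norm.pow 2))
  have hiab : Integrable (fun ω => ‖a ω‖ ^ 2 * ‖b ω‖ ^ 2) := by
    refine (hia.add hib).mono' hmab (Filter.Eventually.of_forall fun ω => ?_)
    have h := sq_nonneg (‖a ω‖ ^ 2 - ‖b ω‖ ^ 2)
    have ha4 : (0:ℝ) ≤ ‖a ω‖ ^ 4 := by positivity
    have hb4 : (0:ℝ) ≤ ‖b ω‖ ^ 4 := by positivity
    rw [Real.norm_eq_abs, abs_of_nonneg (by positivity)]
    simp only [Pi.add_apply]
    nlinarith
  have hicross : Integrable (fun ω => ‖a ω‖ ^ 2 * (inner ℝ (a ω) (b ω) : ℝ)) := by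
    have hm : AEStronglyMeasurable (fun ω => ‖a ω‖ ^ 2 * (inner ℝ (a ω) (b ω) : ℝ)) volume :=
      (hma.norm.pow 2).mul (hma.inner hmb)
    refine (hia.add hib).mono' hm (Filter.Eventually.of_forall fun ω => ?_)
    have hle : |(inner ℝ (a ω) (b ω) : ℝ)| ≤ ‖a ω‖ * ‖b ω‖ := abs_real_inner_le_norm _ _
    have h1 : |‖a ω‖ ^ 2 * (inner ℝ (a ω) (b ω) : ℝ)| ≤ ‖a ω‖ ^ 3 * ‖b ω‖ := by
      rw [abs_mul, abs_of_nonneg (by positivity : (0:ℝ) ≤ ‖a ω‖ ^ 2)]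
      calc ‖a ω‖ ^ 2 * |(inner ℝ (a ω) (b ω) : ℝ)| ≤ ‖a ω‖ ^ 2 * (‖a ω‖ * ‖b ω‖) :=
            mul_le_mul_of_nonneg_left hle (by positivity)
        _ = ‖a ω‖ ^ 3 * ‖b ω‖ := by ring
    rw [Real.norm_eq_abs]
    refine h1.trans ?_
    simp only [Pi.add_apply]
    nlinarith [sq_nonneg (‖a ω‖ ^ 2 - ‖a ω‖ * ‖b ω‖), sq_nonneg (‖a ω‖ ^ 2 - ‖b ω‖ ^ 2),
      sq_nonneg (‖a ω‖), sq_nonneg (‖b ω‖), norm_nonneg (a ω), norm_nonneg (b ω),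
      mul_nonneg (norm_nonneg (a ω)) (norm_nonneg (b ω))]
  have i12 : Integrable (fun ω => ‖a ω‖ ^ 4 + 3 * ‖b ω‖ ^ 4) := hia.add (hib.const_mul 3)
  have i123 : Integrable (fun ω => ‖a ω‖ ^ 4 + 3 * ‖b ω‖ ^ 4 + 8 * (‖a ω‖ ^ 2 * ‖b ω‖ ^ 2)) :=
    i12.add (hiab.const_mul 8)
  have hG : Integrable (fun ω => ‖a ω‖ ^ 4 + 3 * ‖b ω‖ ^ 4 + 8 * (‖a ω‖ ^ 2 * ‖b ω‖ ^ 2)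
      + 4 * (‖a ω‖ ^ 2 * (inner ℝ (a ω) (b ω) : ℝ))) := i123.add (hicross.const_mul 4)
  have hpt : ∀ ω, ‖a ω + b ω‖ ^ 4 ≤ ‖a ω‖ ^ 4 + 3 * ‖b ω‖ ^ 4 + 8 * (‖a ω‖ ^ 2 * ‖b ω‖ ^ 2)
      + 4 * (‖a ω‖ ^ 2 * (inner ℝ (a ω) (b ω) : ℝ)) := by
    intro ω
    have hsq : ‖a ω + b ω‖ ^ 2 = ‖a ω‖ ^ 2 + 2 * (inner ℝ (a ω) (b ω) : ℝ) + ‖b ω‖ ^ 2 :=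
      norm_add_sq_real (a ω) (b ω)
    have h4 : ‖a ω + b ω‖ ^ 4 = (‖a ω + b ω‖ ^ 2) ^ 2 := by ring
    have hinn : (inner ℝ (a ω) (b ω) : ℝ) ^ 2 ≤ ‖a ω‖ ^ 2 * ‖b ω‖ ^ 2 := by
      have := abs_real_inner_le_norm (a ω) (b ω)
      nlinarith [abs_nonneg (inner ℝ (a ω) (b ω) : ℝ), sq_abs (inner ℝ (a ω) (b ω) : ℝ)]
    have hcb : (inner ℝ (a ω) (b ω) : ℝ) * ‖b ω‖ ^ 2 ≤ ‖a ω‖ * ‖b ω‖ ^ 3 := by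
      have h := (le_abs_self (inner ℝ (a ω) (b ω) : ℝ)).trans (abs_real_inner_le_norm (a ω) (b ω))
      nlinarith [sq_nonneg (‖b ω‖), norm_nonneg (b ω)]
    rw [h4, hsq]
    nlinarith [sq_nonneg (‖a ω‖ - ‖b ω‖), norm_nonneg (a ω), norm_nonneg (b ω),
      sq_nonneg (‖a ω‖ * ‖b ω‖ - ‖b ω‖ ^ 2)]
  have hmono : ∫ ω, ‖a ω + b ω‖ ^ 4 ≤ ∫ ω, (‖a ω‖ ^ 4 + 3 * ‖b ω‖ ^ 4
      + 8 * (‖a ω‖ ^ 2 * ‖b ω‖ ^ 2) + 4 * (‖a ω‖ ^ 2 * (inner ℝ (a ω) (b ω) : ℝ))) := by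
    refine integral_mono_of_nonneg (Filter.Eventually.of_forall fun ω => by positivity) hG
      (Filter.Eventually.of_forall hpt)
  calc ∫ ω, ‖a ω + b ω‖ ^ 4 ≤ _ := hmono
    _ = (∫ ω, ‖a ω‖ ^ 4) + 3 * (∫ ω, ‖b ω‖ ^ 4) + 8 * (∫ ω, ‖a ω‖ ^ 2 * ‖b ω‖ ^ 2)
        + 4 * ∫ ω, ‖a ω‖ ^ 2 * (inner ℝ (a ω) (b ω) : ℝ) := by
      rw [integral_add i123 (hicross.const_mul 4),
        integral_add i12 (hiab.const_mul 8),
        integral_add hia (hib.const_mul 3), integral_const_mul, integral_const_mul,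
        integral_const_mul]
    _ = (∫ ω, ‖a ω‖ ^ 4) + 3 * (∫ ω, ‖b ω‖ ^ 4) + 8 * ∫ ω, ‖a ω‖ ^ 2 * ‖b ω‖ ^ 2 := by
      rw [hcross]; ring
end

section
/- Let ρ ∈ [0, 1), c > 0 and T > 0. Then there exist constants C > 0 and μ₀ ∈ (0, 1) such that for every μ ∈ (0, μ₀], every ε ∈ [0, 1], and all sequences (a_n)_{n≥0}, (b_n)_{n≥0} of nonnegative reals satisfying a₀ ≤ c(μ⁴ + ε^{7/2}), b₀ ≤ c(μ⁴ + ε^{7/2}), and for all n ≥ 1: a_n ≤ (1 + cμ) a_{n−1} + cμ b_{n−1} + c(μ⁵ + μ³ε^{7/4} + με^{15/4}), and b_n ≤ (ρ + cμ³) b_{n−1} + cμ³ a_{n−1} + c(μ⁴ + μ³ε^{7/4}), one has a_n + b_n ≤ C(μ⁴ + ε^{7/2}) for every integer n with 0 ≤ n ≤ T/μ. -/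
private lemma aux_AM (μ e74 e72 : ℝ) (h : e72 = e74 * e74) :
    μ ^ 2 * e74 ≤ (μ ^ 4 + e72) / 2 := by
  nlinarith [sq_nonneg (μ ^ 2 - e74)]

private lemma aux_Fa (μ e74 e72 e154 : ℝ) (hμ : 0 ≤ μ)
    (h1 : μ ^ 2 * e74 ≤ (μ ^ 4 + e72) / 2) (h2 : e154 ≤ e72) (h72 : 0 ≤ e72) :
    μ ^ 5 + μ ^ 3 * e74 + μ * e154 ≤ 3 * (μ * (μ ^ 4 + e72)) := by
  nlinarith [mul_le_mul_of_nonneg_left h1 hμ, mul_le_mul_of_nonneg_left h2 hμ,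
    pow_nonneg hμ 5, mul_nonneg hμ h72]

private lemma aux_Fb (μ e74 e72 : ℝ) (hμ : 0 ≤ μ) (hμ1 : μ ≤ 1)
    (h1 : μ ^ 2 * e74 ≤ (μ ^ 4 + e72) / 2) (h72 : 0 ≤ e72) :
    μ ^ 4 + μ ^ 3 * e74 ≤ 2 * (μ ^ 4 + e72) := by
  nlinarith [mul_le_mul_of_nonneg_left h1 hμ,
    mul_nonneg (sub_nonneg.mpr hμ1) (pow_nonneg hμ 4),
    mul_nonneg (sub_nonneg.mpr hμ1) h72]

private lemma aux_astep (c B K μ D P A : ℝ) (hK : K = c + B + 3)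
    (h4 : A ≤ (1 + c * μ) * (c * D * P) + c * μ * (B * D) + c * (3 * (μ * D)))
    (hP1 : 1 ≤ P) (hD : 0 ≤ D) (hμ : 0 ≤ μ) (hc : 0 ≤ c) (hB : 0 ≤ B) :
    A ≤ c * D * (P * (1 + K * μ)) := by
  have e1 : 0 ≤ c * μ * D * (B + 3) * (P - 1) := by
    have h : 0 ≤ c * μ * D * (B + 3) := by positivity
    exact mul_nonneg h (by linarith)
  have e2 : (1 + c * μ) * (c * D * P) + c * μ * (B * D) + c * (3 * (μ * D))
      = c * D * (P * (1 + K * μ)) - c * μ * D * (B + 3) * (P - 1) := by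
    rw [hK]; ring
  linarith [e2.le, e2.ge]

private lemma aux_mu3P (μ P : ℝ) (hμ : 0 ≤ μ) (hμ1 : μ ≤ 1) (hP : 0 ≤ P)
    (h : μ * P ≤ 1) : μ ^ 3 * P ≤ 1 := by
  nlinarith [mul_le_mul_of_nonneg_left h (sq_nonneg μ), sq_nonneg (1 - μ),
    mul_nonneg hμ hP]

private lemma aux_cmu3 (c δ μ : ℝ) (hc : 0 ≤ c) (hμ : 0 ≤ μ) (hμ1 : μ ≤ 1)
    (h : c * μ ≤ δ / 2) : c * μ ^ 3 ≤ δ / 2 := by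
  have hμ3 : μ ^ 3 ≤ μ := by nlinarith [sq_nonneg (1 - μ), sq_nonneg μ]
  nlinarith [mul_le_mul_of_nonneg_left hμ3 hc]

private lemma aux_bstep (c B δ ρ μ D P bn : ℝ)
    (h4 : bn ≤ (ρ + c * μ ^ 3) * (B * D) + c * μ ^ 3 * (c * D * P) + c * (2 * D))
    (h5 : c * μ ^ 3 * (c * D * P) ≤ c ^ 2 * D)
    (h6 : (ρ + c * μ ^ 3) * (B * D) ≤ (1 - 3 * δ / 2) * (B * D))
    (hδBD : δ * (B * D) = 2 * (c ^ 2 + 2 * c) * D)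
    (hpos : 0 ≤ (c ^ 2 + 2 * c) * D) : bn ≤ B * D := by
  nlinarith [h4, h5, h6, hδBD, hpos]

/-- Coupled-recursion comparison underlying Lemma 4 (fourth-order moment bounds
of distributed adversarial training): over a horizon `n ≤ T/μ`, the coupled
sequences satisfy `a_n + b_n ≤ C(μ⁴ + ε^{7/2})`. -/
theorem fourth_moment_recursion_bound
    (ρ : ℝ) (hρ0 : 0 ≤ ρ) (hρ1 : ρ < 1) (c T : ℝ) (hc : 0 < c) (hT : 0 < T) :
    ∃ C > 0, ∃ μ₀ : ℝ, 0 < μ₀ ∧ μ₀ < 1 ∧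
      ∀ μ : ℝ, 0 < μ → μ ≤ μ₀ →
      ∀ ε : ℝ, 0 ≤ ε → ε ≤ 1 →
      ∀ a b : ℕ → ℝ, (∀ n, 0 ≤ a n) → (∀ n, 0 ≤ b n) →
      a 0 ≤ c * (μ ^ 4 + ε ^ ((7 : ℝ) / 2)) →
      b 0 ≤ c * (μ ^ 4 + ε ^ ((7 : ℝ) / 2)) →
      (∀ n : ℕ, a (n + 1) ≤ (1 + c * μ) * a n + c * μ * b n
          + c * (μ ^ 5 + μ ^ 3 * ε ^ ((7 : ℝ) / 4) + μ * ε ^ ((15 : ℝ) / 4))) →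
      (∀ n : ℕ, b (n + 1) ≤ (ρ + c * μ ^ 3) * b n + c * μ ^ 3 * a n
          + c * (μ ^ 4 + μ ^ 3 * ε ^ ((7 : ℝ) / 4))) →
      ∀ n : ℕ, (n : ℝ) ≤ T / μ →
        a n + b n ≤ C * (μ ^ 4 + ε ^ ((7 : ℝ) / 2)) := by
  set δ : ℝ := (1 - ρ) / 2 with hδdef
  clear_value δ
  have hδ : 0 < δ := by rw [hδdef]; linarith
  set B : ℝ := 2 * (c ^ 2 + 2 * c) / δ with hBdef
  clear_value B
  have hB : 0 < B := by rw [hBdef]; positivity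
  have hδB : δ * B = 2 * (c ^ 2 + 2 * c) := by
    rw [hBdef]; field_simp
  have hcB : c ≤ B := by
    rw [hBdef, le_div_iff₀ hδ]
    have hδle : δ ≤ 1 / 2 := by rw [hδdef]; linarith
    nlinarith
  set K : ℝ := c + B + 3 with hKdef
  clear_value K
  have hK : 0 < K := by rw [hKdef]; positivity
  refine ⟨c * Real.exp (K * T) + B, by positivity,
    min (min (1 / 2) (Real.exp (-(K * T)))) (δ / (2 * c)),
    lt_min (lt_min (by norm_num) (Real.exp_pos _)) (by positivity), ?_, ?_⟩
  · have h : min (min (1 / 2) (Real.exp (-(K * T)))) (δ / (2 * c)) ≤ 1 / 2 :=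
      le_trans (min_le_left _ _) (min_le_left _ _)
    linarith
  intro μ hμ hμ0 ε hε0 hε1 a b hapos hbpos ha0 hb0 hA hBrec n hn
  have hμhalf : μ ≤ 1 / 2 :=
    hμ0.trans (le_trans (min_le_left _ _) (min_le_left _ _))
  have hμ1 : μ ≤ 1 := by linarith
  have hμe : μ ≤ Real.exp (-(K * T)) :=
    hμ0.trans (le_trans (min_le_left _ _) (min_le_right _ _))
  have hμδ : μ ≤ δ / (2 * c) := hμ0.trans (min_le_right _ _)
  have hcμ : c * μ ≤ δ / 2 := by
    rw [le_div_iff₀ (by positivity)] at hμδ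
    linarith
  set D : ℝ := μ ^ 4 + ε ^ ((7 : ℝ) / 2) with hDdef
  clear_value D
  have hε72 : (0:ℝ) ≤ ε ^ ((7 : ℝ) / 2) := Real.rpow_nonneg hε0 _
  have hε74 : (0:ℝ) ≤ ε ^ ((7 : ℝ) / 4) := Real.rpow_nonneg hε0 _
  have hD : 0 ≤ D := by rw [hDdef]; positivity
  have hsq : ε ^ ((7 : ℝ) / 2) = ε ^ ((7 : ℝ) / 4) * ε ^ ((7 : ℝ) / 4) := by
    rw [← Real.rpow_add' hε0 (by norm_num)]; norm_num
  have h154 : ε ^ ((15 : ℝ) / 4) ≤ ε ^ ((7 : ℝ) / 2) := by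
    rcases eq_or_lt_of_le hε0 with h | h
    · rw [← h, Real.zero_rpow (by norm_num), Real.zero_rpow (by norm_num)]
    · exact Real.rpow_le_rpow_of_exponent_ge h hε1 (by norm_num)
  have hAM : μ ^ 2 * ε ^ ((7 : ℝ) / 4) ≤ (μ ^ 4 + ε ^ ((7 : ℝ) / 2)) / 2 :=
    aux_AM μ _ _ hsq
  have hFa : c * (μ ^ 5 + μ ^ 3 * ε ^ ((7 : ℝ) / 4) + μ * ε ^ ((15 : ℝ) / 4))
      ≤ c * (3 * (μ * D)) := by
    apply mul_le_mul_of_nonneg_left _ hc.le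
    rw [hDdef]
    exact aux_Fa μ _ _ _ hμ.le hAM h154 hε72
  have hFb : c * (μ ^ 4 + μ ^ 3 * ε ^ ((7 : ℝ) / 4)) ≤ c * (2 * D) := by
    apply mul_le_mul_of_nonneg_left _ hc.le
    rw [hDdef]
    exact aux_Fb μ _ _ hμ.le hμ1 hAM hε72
  have hPe : ∀ m : ℕ, (m : ℝ) ≤ T / μ → (1 + K * μ) ^ m ≤ Real.exp (K * T) := by
    intro m hm
    have h1 : 1 + K * μ ≤ Real.exp (K * μ) := by
      have h := Real.add_one_le_exp (K * μ); linarith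
    have hmT : (m : ℝ) * μ ≤ T := by
      rw [← le_div_iff₀ hμ]; exact hm
    calc (1 + K * μ) ^ m ≤ (Real.exp (K * μ)) ^ m := by
          apply pow_le_pow_left₀ (by positivity) h1
      _ = Real.exp ((m : ℕ) * (K * μ)) := (Real.exp_nat_mul _ m).symm
      _ ≤ Real.exp (K * T) := by
          apply Real.exp_le_exp.mpr
          calc (m : ℝ) * (K * μ) = K * ((m : ℝ) * μ) := by ring
            _ ≤ K * T := mul_le_mul_of_nonneg_left hmT hK.le
  have key : ∀ m : ℕ, (m : ℝ) ≤ T / μ →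
      a m ≤ c * D * (1 + K * μ) ^ m ∧ b m ≤ B * D := by
    intro m
    induction m with
    | zero =>
      intro _
      refine ⟨by simpa using ha0, ?_⟩
      have h : c * D ≤ B * D := mul_le_mul_of_nonneg_right hcB hD
      calc b 0 ≤ c * D := hb0
        _ ≤ B * D := h
    | succ m ih =>
      intro hm1
      have hm : (m : ℝ) ≤ T / μ := by
        refine le_trans ?_ hm1
        push_cast; linarith
      obtain ⟨iha, ihb⟩ := ih hm
      have hP1 : (1:ℝ) ≤ (1 + K * μ) ^ m :=
        one_le_pow₀ (by linarith [mul_nonneg hK.le hμ.le])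
      have hPle : (1 + K * μ) ^ m ≤ Real.exp (K * T) := hPe m hm
      constructor
      · have h2 : (1 + c * μ) * a m ≤ (1 + c * μ) * (c * D * (1 + K * μ) ^ m) :=
          mul_le_mul_of_nonneg_left iha (by positivity)
        have h3 : c * μ * b m ≤ c * μ * (B * D) :=
          mul_le_mul_of_nonneg_left ihb (by positivity)
        have h4 : a (m + 1) ≤ (1 + c * μ) * (c * D * (1 + K * μ) ^ m)
            + c * μ * (B * D) + c * (3 * (μ * D)) := by
          have h := hA m; linarith [hFa]
        rw [pow_succ]
        exact aux_astep c B K μ D _ _ hKdef h4 hP1 hD hμ.le hc.le hB.le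
      · have h2 : (ρ + c * μ ^ 3) * b m ≤ (ρ + c * μ ^ 3) * (B * D) :=
          mul_le_mul_of_nonneg_left ihb (by positivity)
        have h3 : c * μ ^ 3 * a m ≤ c * μ ^ 3 * (c * D * (1 + K * μ) ^ m) :=
          mul_le_mul_of_nonneg_left iha (by positivity)
        have h4 : b (m + 1) ≤ (ρ + c * μ ^ 3) * (B * D)
            + c * μ ^ 3 * (c * D * (1 + K * μ) ^ m) + c * (2 * D) := by
          have h := hBrec m; linarith [hFb]
        have hμP : μ * (1 + K * μ) ^ m ≤ 1 := by
          calc μ * (1 + K * μ) ^ m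
              ≤ Real.exp (-(K * T)) * Real.exp (K * T) :=
                mul_le_mul hμe hPle (by positivity) (Real.exp_pos _).le
            _ = 1 := by rw [← Real.exp_add]; simp
        have hμ3P : μ ^ 3 * (1 + K * μ) ^ m ≤ 1 :=
          aux_mu3P μ _ hμ.le hμ1 (by linarith) hμP
        have h5 : c * μ ^ 3 * (c * D * (1 + K * μ) ^ m) ≤ c ^ 2 * D := by
          have h := mul_le_mul_of_nonneg_left hμ3P
            (show (0:ℝ) ≤ c ^ 2 * D by positivity)
          calc c * μ ^ 3 * (c * D * (1 + K * μ) ^ m)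
              = c ^ 2 * D * (μ ^ 3 * (1 + K * μ) ^ m) := by ring
            _ ≤ c ^ 2 * D * 1 := h
            _ = c ^ 2 * D := by ring
        have hcμ3 : c * μ ^ 3 ≤ δ / 2 := aux_cmu3 c δ μ hc.le hμ.le hμ1 hcμ
        have hcoef : ρ + c * μ ^ 3 ≤ 1 - 3 * δ / 2 := by
          have hρδ : ρ = 1 - 2 * δ := by rw [hδdef]; ring
          rw [hρδ]; linarith
        have h6 : (ρ + c * μ ^ 3) * (B * D) ≤ (1 - 3 * δ / 2) * (B * D) :=
          mul_le_mul_of_nonneg_right hcoef (by positivity)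
        have hδBD : δ * (B * D) = 2 * (c ^ 2 + 2 * c) * D := by
          rw [show δ * (B * D) = δ * B * D by ring, hδB]
        exact aux_bstep c B δ ρ μ D _ _ h4 h5 h6 hδBD (by positivity)
  obtain ⟨han, hbn⟩ := key n hn
  have hPle : (1 + K * μ) ^ n ≤ Real.exp (K * T) := hPe n hn
  have hfin : c * D * (1 + K * μ) ^ n ≤ c * D * Real.exp (K * T) :=
    mul_le_mul_of_nonneg_left hPle (by positivity)
  have hgoal : a n + b n ≤ (c * Real.exp (K * T) + B) * D := by
    have h : (c * Real.exp (K * T) + B) * D = c * D * Real.exp (K * T) + B * D := by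
      ring
    linarith
  exact hgoal
end

section
/- Let ρ ∈ [0, 1) and c, r > 0. Then there exist constants C > 0 and μ₀ ∈ (0, 1) such that for every μ ∈ (0, μ₀], every ε ≥ 0, every q ≥ 0, and all sequences (a_n)_{n≥0}, (b_n)_{n≥0} of nonnegative reals with a₀ = b₀ = 0 satisfying for all n ≥ 1: a_n ≤ (1 − rμ) a_{n−1} + cμ b_{n−1} + cμ(q + ε²), and b_n ≤ (ρ + cμ²) b_{n−1} + cμ² a_{n−1} + cμ²(q + ε²), one has a_n + b_n ≤ C(q + ε²) for every n ≥ 0. -/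
/-- Coupled-recursion comparison underlying Lemma 5 (approximation error of the
short-term model): the coupled error sequences remain bounded by `C(q + ε²)`
uniformly in `n`. -/
theorem short_term_model_error_recursion_bound
    (ρ : ℝ) (hρ0 : 0 ≤ ρ) (hρ1 : ρ < 1) (c r : ℝ) (hc : 0 < c) (hr : 0 < r) :
    ∃ C > 0, ∃ μ₀ : ℝ, 0 < μ₀ ∧ μ₀ < 1 ∧
      ∀ μ : ℝ, 0 < μ → μ ≤ μ₀ →
      ∀ ε : ℝ, 0 ≤ ε →
      ∀ q : ℝ, 0 ≤ q →
      ∀ a b : ℕ → ℝ, (∀ n, 0 ≤ a n) → (∀ n, 0 ≤ b n) →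
      a 0 = 0 → b 0 = 0 →
      (∀ n : ℕ, a (n + 1) ≤ (1 - r * μ) * a n + c * μ * b n + c * μ * (q + ε ^ 2)) →
      (∀ n : ℕ, b (n + 1) ≤ (ρ + c * μ ^ 2) * b n + c * μ ^ 2 * a n
          + c * μ ^ 2 * (q + ε ^ 2)) →
      ∀ n : ℕ, a n + b n ≤ C * (q + ε ^ 2) := by
  refine ⟨4 * c / r, by positivity,
    min (min (r / (2 * c)) ((1 - ρ) / (4 * c))) (min ((1 - ρ) / r) (1 / 2)),
    ?_, ?_, ?_⟩
  · have h1 : 0 < r / (2 * c) := by positivity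
    have h2 : 0 < (1 - ρ) / (4 * c) := div_pos (by linarith) (by positivity)
    have h3 : 0 < (1 - ρ) / r := div_pos (by linarith) hr
    simp only [lt_min_iff]
    exact ⟨⟨h1, h2⟩, h3, by norm_num⟩
  · calc min (min (r / (2 * c)) ((1 - ρ) / (4 * c))) (min ((1 - ρ) / r) (1 / 2))
        ≤ min ((1 - ρ) / r) (1 / 2) := min_le_right _ _
      _ ≤ 1 / 2 := min_le_right _ _
      _ < 1 := by norm_num
  intro μ hμ hμ0 ε hε q hq a b hA hB ha0 hb0 ha hb
  have hS : 0 ≤ q + ε ^ 2 := by positivity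
  have hμ1 : c * μ ≤ r / 2 := by
    have := le_trans hμ0 (le_trans (min_le_left _ _) (min_le_left _ _))
    calc c * μ ≤ c * (r / (2 * c)) := by nlinarith
      _ = r / 2 := by field_simp
  have hμ2 : c * μ ≤ (1 - ρ) / 4 := by
    have := le_trans hμ0 (le_trans (min_le_left _ _) (min_le_right _ _))
    calc c * μ ≤ c * ((1 - ρ) / (4 * c)) := by nlinarith
      _ = (1 - ρ) / 4 := by field_simp
  have hμ3 : r * μ ≤ 1 - ρ := by
    have := le_trans hμ0 (le_trans (min_le_right _ _) (min_le_left _ _))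
    calc r * μ ≤ r * ((1 - ρ) / r) := by nlinarith
      _ = 1 - ρ := by field_simp
  have hμ4 : μ ≤ 1 / 2 :=
    le_trans hμ0 (le_trans (min_le_right _ _) (min_le_right _ _))
  intro n
  induction n with
  | zero => rw [ha0, hb0]; norm_num; positivity
  | succ n ih =>
    have ha' := ha n
    have hb' := hb n
    have han := hA n
    have hbn := hB n
    -- coefficient bounds
    have hcoefA : (1 - r * μ + c * μ ^ 2) * a n ≤ (1 - r * μ / 2) * a n := by
      nlinarith [mul_nonneg han hμ.le]
    have hcoefB : (ρ + c * μ + c * μ ^ 2) * b n ≤ (1 - r * μ / 2) * b n := by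
      have hcoef : ρ + c * μ + c * μ ^ 2 ≤ 1 - r * μ / 2 := by
        nlinarith [mul_le_mul_of_nonneg_left hμ4 (mul_pos hc hμ).le]
      exact mul_le_mul_of_nonneg_right hcoef hbn
    have h5 : c * μ ^ 2 * (q + ε ^ 2) ≤ c * μ * (q + ε ^ 2) := by
      nlinarith [mul_nonneg (mul_nonneg hc.le hμ.le) hS]
    have hstep : a (n + 1) + b (n + 1)
        ≤ (1 - r * μ / 2) * (a n + b n) + 2 * c * μ * (q + ε ^ 2) := by
      have hexp : (1 - r * μ) * a n + c * μ * b n + c * μ * (q + ε ^ 2)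
          + ((ρ + c * μ ^ 2) * b n + c * μ ^ 2 * a n + c * μ ^ 2 * (q + ε ^ 2))
          = (1 - r * μ + c * μ ^ 2) * a n + (ρ + c * μ + c * μ ^ 2) * b n
            + (c * μ * (q + ε ^ 2) + c * μ ^ 2 * (q + ε ^ 2)) := by ring
      have hexp2 : (1 - r * μ / 2) * (a n + b n)
          = (1 - r * μ / 2) * a n + (1 - r * μ / 2) * b n := by ring
      linarith
    have hcontr : 0 ≤ 1 - r * μ / 2 := by linarith
    have hIH : (1 - r * μ / 2) * (a n + b n)
        ≤ (1 - r * μ / 2) * (4 * c / r * (q + ε ^ 2)) :=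
      mul_le_mul_of_nonneg_left ih hcontr
    have hkey : (1 - r * μ / 2) * (4 * c / r * (q + ε ^ 2)) + 2 * c * μ * (q + ε ^ 2)
        = 4 * c / r * (q + ε ^ 2) := by
      have hr' : r ≠ 0 := hr.ne'
      field_simp
      ring
    linarith
end

section
/- Let H be a real symmetric positive definite M×M matrix and μ > 0 with μ‖H‖ < 1 (operator norm). Let s₁, …, s_N : Ω → ℝ^M be mutually independent square-integrable random vectors, each with mean zero and with common covariance matrix R = 𝔼[s_n s_nᵀ]. Define x₀ = 0 ∈ ℝ^M and x_n = (I − μH) x_{n−1} − μ s_n for 1 ≤ n ≤ N. Then 𝔼⟨x_N, H x_N⟩ = μ · Tr((2I − μH)^{−1} (I − (I − μH)^{2N}) R). -/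
open MeasureTheory Matrix
open scoped BigOperators
open scoped RealInnerProductSpace

theorem mySum_dotProduct {α : Type*} [Fintype α] {β : Type*} (s : Finset β)
    (f : β → α → ℝ) (w : α → ℝ) :
    (∑ n ∈ s, f n) ⬝ᵥ w = ∑ n ∈ s, f n ⬝ᵥ w := by
  simp only [dotProduct, Finset.sum_apply, Finset.sum_mul]
  exact Finset.sum_comm

theorem myDotProduct_sum {α : Type*} [Fintype α] {β : Type*} (s : Finset β)
    (w : α → ℝ) (f : β → α → ℝ) :
    w ⬝ᵥ (∑ n ∈ s, f n) = ∑ n ∈ s, w ⬝ᵥ f n := by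
  simp only [dotProduct, Finset.sum_apply, Finset.mul_sum]
  exact Finset.sum_comm

theorem myQuadformExpand (M N : ℕ) (H : Matrix (Fin M) (Fin M) ℝ) (μ : ℝ)
    (A : Fin N → Matrix (Fin M) (Fin M) ℝ) (v : Fin N → Fin M → ℝ) :
    (∑ n : Fin N, (-μ) • (A n).mulVec (v n)) ⬝ᵥ
      H.mulVec (∑ n : Fin N, (-μ) • (A n).mulVec (v n))
    = ∑ m : Fin N, ∑ n : Fin N, ∑ i, ∑ j,
        (μ ^ 2 * ((A m)ᵀ * H * A n) i j) * (v m i * v n j) := by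
  rw [show H.mulVec (∑ n : Fin N, (-μ) • (A n).mulVec (v n))
      = ∑ n : Fin N, H.mulVec ((-μ) • (A n).mulVec (v n)) from map_sum H.mulVecLin _ _]
  rw [mySum_dotProduct]
  refine Finset.sum_congr rfl fun m _ => ?_
  rw [myDotProduct_sum]
  refine Finset.sum_congr rfl fun n _ => ?_
  rw [Matrix.mulVec_smul, smul_dotProduct, dotProduct_smul,
    Matrix.mulVec_mulVec]
  have h1 : (A m).mulVec (v m) ⬝ᵥ (H * A n).mulVec (v n)
      = v m ⬝ᵥ ((A m)ᵀ * (H * A n)).mulVec (v n) := by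
    conv_rhs => rw [← Matrix.mulVec_mulVec, Matrix.dotProduct_mulVec (v m),
      Matrix.vecMul_transpose]
  rw [h1]
  have h2 : v m ⬝ᵥ ((A m)ᵀ * (H * A n)).mulVec (v n)
      = ∑ i, ∑ j, ((A m)ᵀ * H * A n) i j * (v m i * v n j) := by
    simp only [dotProduct, mulVec, Finset.mul_sum, Matrix.mul_assoc]
    refine Finset.sum_congr rfl fun i _ => Finset.sum_congr rfl fun j _ => by ring
  rw [h2, smul_smul, smul_eq_mul, Finset.mul_sum]
  refine Finset.sum_congr rfl fun i _ => ?_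
  rw [Finset.mul_sum]
  refine Finset.sum_congr rfl fun j _ => by ring

/-- Closed-form weighted second moment of the centralized short-term model
(the escaping-efficiency term `e(n)` of Theorem 1): for
`x_n = (I − μH) x_{n−1} − μ s_n`, `x₀ = 0`, with `H` symmetric positive
definite, `μ‖H‖ < 1`, and `s₁, …, s_N` independent, mean-zero, with common
covariance `R`, one has
`𝔼⟨x_N, H x_N⟩ = μ Tr((2I − μH)⁻¹ (I − (I − μH)^{2N}) R)`. -/
theorem short_term_model_weighted_second_moment
    {Ω : Type*} [MeasureSpace Ω] [IsProbabilityMeasure (volume : Measure Ω)]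
    (M N : ℕ) (H : Matrix (Fin M) (Fin M) ℝ) (hH : H.PosDef)
    (μ : ℝ) (hμ : 0 < μ)
    (hμH : μ * ‖Matrix.toEuclideanCLM (𝕜 := ℝ) H‖ < 1)
    (s : Fin N → Ω → (Fin M → ℝ))
    (hmeas : ∀ n, Measurable (s n))
    (hL2 : ∀ (n : Fin N) (i : Fin M), MemLp (fun ω => s n ω i) 2)
    (hindep : ProbabilityTheory.iIndepFun s)
    (hmean : ∀ (n : Fin N) (i : Fin M), ∫ ω, s n ω i = 0)
    (R : Matrix (Fin M) (Fin M) ℝ)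
    (hcov : ∀ (n : Fin N) (i j : Fin M), ∫ ω, s n ω i * s n ω j = R i j)
    (x : ℕ → Ω → (Fin M → ℝ))
    (hx0 : ∀ ω, x 0 ω = 0)
    (hxrec : ∀ (n : Fin N) (ω : Ω),
      x (n + 1) ω = (1 - μ • H).mulVec (x n ω) - μ • s n ω) :
    ∫ ω, x N ω ⬝ᵥ H.mulVec (x N ω)
      = μ * Matrix.trace
          (((2 : Matrix (Fin M) (Fin M) ℝ) - μ • H)⁻¹
            * (1 - (1 - μ • H) ^ (2 * N)) * R) := by
  classical
  rcases Nat.eq_zero_or_pos N with hN0 | hNpos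
  · subst hN0
    simp [hx0, Matrix.mulVec_zero]
  obtain ⟨n0, hn0⟩ : ∃ n0 : Fin N, True := ⟨⟨0, hNpos⟩, trivial⟩
  set B : Matrix (Fin M) (Fin M) ℝ := 1 - μ • H with hB
  set D : Matrix (Fin M) (Fin M) ℝ := 2 - μ • H with hDdef
  set G : Matrix (Fin M) (Fin M) ℝ := ∑ k ∈ Finset.range N, (B ^ 2) ^ k with hG
  set A : Fin N → Matrix (Fin M) (Fin M) ℝ := fun n => B ^ (N - 1 - (n : ℕ)) with hA
  set C : Fin N → Fin N → Matrix (Fin M) (Fin M) ℝ := fun m n => (A m)ᵀ * H * A n with hC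
  -- operator norm bound on the quadratic form
  have hb : ∀ y : Fin M → ℝ,
      y ⬝ᵥ H.mulVec y ≤ ‖Matrix.toEuclideanCLM (𝕜 := ℝ) H‖ * (y ⬝ᵥ y) := by
    intro y
    set T := Matrix.toEuclideanCLM (𝕜 := ℝ) H with hT
    set z : EuclideanSpace ℝ (Fin M) := (WithLp.equiv 2 _).symm y with hz
    have hTz : T z = (WithLp.equiv 2 _).symm (H.mulVec y) := by
      rw [hT, hz]; exact Matrix.toEuclideanCLM_toLp H y
    have h1 : y ⬝ᵥ H.mulVec y = ⟪z, T z⟫ := by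
      rw [hTz]
      simp [PiLp.inner_apply, dotProduct, hz, mul_comm]
    have h2 : y ⬝ᵥ y = ‖z‖ ^ 2 := by
      rw [← real_inner_self_eq_norm_sq]
      simp only [PiLp.inner_apply, dotProduct, hz, WithLp.equiv_symm_apply, RCLike.inner_apply, conj_trivial]
    rw [h1, h2]
    calc ⟪z, T z⟫ ≤ ‖z‖ * ‖T z‖ := real_inner_le_norm _ _
      _ ≤ ‖z‖ * (‖T‖ * ‖z‖) := by
          have := T.le_opNorm z
          nlinarith [norm_nonneg z]
      _ = ‖T‖ * ‖z‖ ^ 2 := by ring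
  -- positive definiteness of D = 2 - μH
  have hDpos : D.PosDef := by
    refine Matrix.posDef_iff_dotProduct_mulVec.mpr ⟨?_, ?_⟩
    · have h1 : ((2 : Matrix (Fin M) (Fin M) ℝ)).IsHermitian := by
        simp [Matrix.IsHermitian]
      have h2 : (μ • H).IsHermitian := by
        simp only [Matrix.IsHermitian]
        simp
        rw [show Hᵀ = H from hH.1.eq]
      exact h1.sub h2
    · intro y hy
      have hyy : 0 < y ⬝ᵥ y := by
        rcases lt_or_eq_of_le (Finset.sum_nonneg fun i _ => mul_self_nonneg (y i)) with h | h
        · exact h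
        · exact absurd ((dotProduct_self_eq_zero).mp h.symm) hy
      have hDm : star y ⬝ᵥ D.mulVec y
          = 2 * (y ⬝ᵥ y) - μ * (y ⬝ᵥ H.mulVec y) := by
        have h2 : ((2 : Matrix (Fin M) (Fin M) ℝ)).mulVec y = y + y := by
          have : (2 : Matrix (Fin M) (Fin M) ℝ) = 1 + 1 := by norm_num
          simp [this, add_mulVec, one_mulVec]
        rw [hDdef]
        simp [sub_mulVec, dotProduct_sub, smul_mulVec, dotProduct_smul, h2,
          dotProduct_add, star_trivial]
      rw [hDm]
      have hnn : 0 ≤ ‖Matrix.toEuclideanCLM (𝕜 := ℝ) H‖ := norm_nonneg _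
      nlinarith [mul_le_mul_of_nonneg_left (hb y) hμ.le, mul_pos hμ hyy]
  -- the key matrix identity
  have hinv : D⁻¹ * (1 - (B ^ 2) ^ N) = μ • (G * H) := by
    have h2eq : (2 : Matrix (Fin M) (Fin M) ℝ) = 1 + 1 := by norm_num
    have hDH : μ • (D * H) = 1 - B ^ 2 := by
      rw [hB, hDdef]
      simp only [pow_two, sub_mul, mul_sub, h2eq, add_mul, one_mul, mul_one, smul_sub, smul_add,
        Matrix.mul_smul, Matrix.smul_mul, smul_smul]
      abel
    have hμHB : Commute (μ • H) B := (Commute.one_right _).sub_right (Commute.refl _)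
    have hDB : Commute D B := by
      rw [hDdef, h2eq]
      exact ((Commute.one_left B).add_left (Commute.one_left B)).sub_left hμHB
    have hDG : Commute D G := Commute.sum_right _ _ _ fun k _ => (hDB.pow_right 2).pow_right k
    have hGB2 : Commute G (1 - B ^ 2) := Commute.sum_left _ _ _ fun k _ =>
      ((Commute.one_right _).sub_right ((Commute.refl (B ^ 2)).pow_left k))
    have key : D * (μ • (G * H)) = 1 - (B ^ 2) ^ N := by
      calc D * (μ • (G * H)) = G * (μ • (D * H)) := by
            rw [Matrix.mul_smul, Matrix.mul_smul, ← Matrix.mul_assoc, hDG.eq, Matrix.mul_assoc]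
        _ = (1 - B ^ 2) * G := by rw [hDH, hGB2.eq]
        _ = 1 - (B ^ 2) ^ N := mul_neg_geom_sum _ _
    rw [← key, ← Matrix.mul_assoc,
      Matrix.nonsing_inv_mul _ ((Matrix.isUnit_iff_isUnit_det D).mp hDpos.isUnit),
      Matrix.one_mul]
  -- representation of x N
  have hrep : ∀ ω, x N ω = ∑ n : Fin N, (-μ) • (A n).mulVec (s n ω) := by
    intro ω
    set s' : ℕ → Ω → Fin M → ℝ := fun j ω => if h : j < N then s ⟨j, h⟩ ω else 0 with hs'
    have key : ∀ k, k ≤ N →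
        x k ω = ∑ j ∈ Finset.range k, (-μ) • (B ^ (k - 1 - j)).mulVec (s' j ω) := by
      intro k
      induction k with
      | zero => intro _; simp [hx0]
      | succ k ih =>
        intro hk
        have hkN : k < N := hk
        have hrec := hxrec ⟨k, hkN⟩ ω
        simp only [Fin.val_mk] at hrec
        rw [hrec, ih (le_of_lt hkN)]
        rw [Finset.sum_range_succ]
        have hterm : (-μ) • (B ^ (k + 1 - 1 - k)).mulVec (s' k ω) = -(μ • s ⟨k, hkN⟩ ω) := by
          simp [hs', hkN, Nat.sub_self, neg_smul]
        rw [hterm]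
        have hmv : B.mulVec (∑ j ∈ Finset.range k, (-μ) • (B ^ (k - 1 - j)).mulVec (s' j ω))
            = ∑ j ∈ Finset.range k, (-μ) • (B ^ (k + 1 - 1 - j)).mulVec (s' j ω) := by
          rw [show B *ᵥ (∑ j ∈ Finset.range k, (-μ) • (B ^ (k - 1 - j)).mulVec (s' j ω))
              = ∑ j ∈ Finset.range k, B *ᵥ ((-μ) • (B ^ (k - 1 - j)).mulVec (s' j ω)) from
              map_sum B.mulVecLin _ _]
          refine Finset.sum_congr rfl fun j hj => ?_
          rw [Matrix.mulVec_smul, Matrix.mulVec_mulVec, ← pow_succ',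
            show k - 1 - j + 1 = k + 1 - 1 - j from by have := Finset.mem_range.mp hj; omega]
        rw [hmv]
        abel
    rw [key N le_rfl]
    rw [Finset.sum_range fun j => (-μ) • (B ^ (N - 1 - j)).mulVec (s' j ω)]
    exact Finset.sum_congr rfl fun n _ => by simp [hA, hs', n.isLt]
  -- pointwise expansion of the quadratic form
  have hpt : ∀ ω, x N ω ⬝ᵥ H.mulVec (x N ω)
      = ∑ m : Fin N, ∑ n : Fin N, ∑ i, ∑ j,
          (μ ^ 2 * C m n i j) * (s m ω i * s n ω j) := by
    intro ω
    rw [hrep ω]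
    exact myQuadformExpand M N H μ A (fun n => s n ω)
  -- integrability of products
  have hmul_int : ∀ (m n : Fin N) (i j : Fin M),
      Integrable (fun ω => s m ω i * s n ω j) := by
    intro m n i j
    have h : MemLp ((fun ω => s m ω i) • fun ω => s n ω j) 1 (volume : Measure Ω) := by
      exact MemLp.smul (hL2 n j) (hL2 m i)
    exact h.integrable le_rfl
  -- value of expectations of products
  have hcov' : ∀ (m n : Fin N) (i j : Fin M),
      ∫ ω, s m ω i * s n ω j = if m = n then R i j else 0 := by
    intro m n i j
    by_cases h : m = n
    · subst h; simp [hcov m i j]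
    · simp only [h, if_false]
      have hind : ProbabilityTheory.IndepFun (fun ω => s m ω i) (fun ω => s n ω j) volume :=
        (hindep.indepFun h).comp (measurable_pi_apply i) (measurable_pi_apply j)
      rw [hind.integral_fun_mul_eq_mul_integral ((hL2 m i).aestronglyMeasurable) ((hL2 n j).aestronglyMeasurable),
        hmean, zero_mul]
  -- the quadruple-indexed family
  set F : (Fin N × Fin N) × Fin M × Fin M → Ω → ℝ :=
    fun q ω => (μ ^ 2 * C q.1.1 q.1.2 q.2.1 q.2.2) * (s q.1.1 ω q.2.1 * s q.1.2 ω q.2.2)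
    with hF
  have hQ : ∀ ω, x N ω ⬝ᵥ H.mulVec (x N ω) = ∑ q, F q ω := by
    intro ω
    rw [hpt ω]
    rw [show (∑ q, F q ω) = ∑ m : Fin N, ∑ n : Fin N, ∑ i, ∑ j, F ((m, n), (i, j)) ω by
      simp only [Fintype.sum_prod_type]]
  have hFint : ∀ q, Integrable (F q) := fun q =>
    (hmul_int q.1.1 q.1.2 q.2.1 q.2.2).const_mul _
  -- compute the integral
  have hI : ∫ ω, x N ω ⬝ᵥ H.mulVec (x N ω)
      = ∑ m : Fin N, ∑ i, ∑ j, (μ ^ 2 * C m m i j) * R i j := by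
    calc ∫ ω, x N ω ⬝ᵥ H.mulVec (x N ω) = ∫ ω, ∑ q, F q ω :=
          integral_congr_ae (Filter.Eventually.of_forall hQ)
      _ = ∑ q, ∫ ω, F q ω := integral_finset_sum _ fun q _ => hFint q
      _ = ∑ q : (Fin N × Fin N) × Fin M × Fin M, (μ ^ 2 * C q.1.1 q.1.2 q.2.1 q.2.2) *
            (if q.1.1 = q.1.2 then R q.2.1 q.2.2 else 0) := by
          refine Finset.sum_congr rfl fun q _ => ?_
          show ∫ ω, (μ ^ 2 * C q.1.1 q.1.2 q.2.1 q.2.2) *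
            (s q.1.1 ω q.2.1 * s q.1.2 ω q.2.2) = _
          rw [integral_const_mul, hcov']
      _ = ∑ m : Fin N, ∑ n : Fin N, ∑ i, ∑ j,
            (μ ^ 2 * C m n i j) * (if m = n then R i j else 0) := by
          simp only [Fintype.sum_prod_type]
      _ = ∑ m : Fin N, ∑ n : Fin N,
            (if m = n then ∑ i, ∑ j, (μ ^ 2 * C m n i j) * R i j else 0) := by
          refine Finset.sum_congr rfl fun m _ => Finset.sum_congr rfl fun n _ => ?_
          by_cases h : m = n <;> simp [h]
      _ = ∑ m : Fin N, ∑ i, ∑ j, (μ ^ 2 * C m m i j) * R i j := by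
          refine Finset.sum_congr rfl fun m _ => ?_
          rw [Finset.sum_ite_eq Finset.univ m
            (fun n => ∑ i, ∑ j, (μ ^ 2 * C m n i j) * R i j)]
          simp
  rw [hI]
  -- symmetry of R
  have hRsymm : ∀ i j, R i j = R j i := by
    intro i j
    rw [← hcov n0 i j, ← hcov n0 j i]
    exact integral_congr_ae (Filter.Eventually.of_forall fun ω => mul_comm _ _)
  -- trace formula
  have htr : ∀ X : Matrix (Fin M) (Fin M) ℝ,
      ∑ i, ∑ j, X i j * R i j = Matrix.trace (X * R) := by
    intro X
    have : Matrix.trace (X * R) = ∑ i, ∑ j, X i j * R j i := by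
      simp [Matrix.trace, Matrix.diag, Matrix.mul_apply]
    rw [this]
    exact Finset.sum_congr rfl fun i _ => Finset.sum_congr rfl fun j _ => by rw [hRsymm]
  -- commutation facts
  have hHt : Hᵀ = H := hH.1.eq
  have hBt : Bᵀ = B := by
    rw [hB, Matrix.transpose_sub, Matrix.transpose_one, Matrix.transpose_smul, hHt]
  have hHB : Commute H B := by
    rw [hB]
    exact (Commute.one_right H).sub_right ((Commute.refl H).smul_right μ)
  have hCmm : ∀ m : Fin N, C m m = (B ^ 2) ^ (N - 1 - (m : ℕ)) * H := by
    intro m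
    rw [hC]
    simp only [hA]
    rw [Matrix.transpose_pow, hBt, Matrix.mul_assoc, ((hHB.pow_right _).eq),
      ← Matrix.mul_assoc, ← pow_add, ← two_mul, pow_mul]
  have hsum : ∑ m : Fin N, C m m = G * H := by
    calc ∑ m : Fin N, C m m = ∑ m : Fin N, (B ^ 2) ^ (N - 1 - (m : ℕ)) * H := by
          exact Finset.sum_congr rfl fun m _ => hCmm m
      _ = (∑ m : Fin N, (B ^ 2) ^ (N - 1 - (m : ℕ))) * H := by rw [Finset.sum_mul]
      _ = (∑ j ∈ Finset.range N, (B ^ 2) ^ (N - 1 - j)) * H := by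
          rw [Fin.sum_univ_eq_sum_range (fun j => (B ^ 2) ^ (N - 1 - j))]
      _ = G * H := by rw [hG, Finset.sum_range_reflect (fun j => (B ^ 2) ^ j) N]
  -- final computation
  calc ∑ m : Fin N, ∑ i, ∑ j, (μ ^ 2 * C m m i j) * R i j
      = ∑ m : Fin N, μ ^ 2 * Matrix.trace (C m m * R) := by
        refine Finset.sum_congr rfl fun m _ => ?_
        rw [← htr (C m m), Finset.mul_sum]
        refine Finset.sum_congr rfl fun i _ => ?_
        rw [Finset.mul_sum]
        exact Finset.sum_congr rfl fun j _ => by ring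
    _ = μ ^ 2 * Matrix.trace ((∑ m : Fin N, C m m) * R) := by
        rw [← Finset.mul_sum, ← Matrix.trace_sum, ← Finset.sum_mul]
    _ = μ ^ 2 * Matrix.trace (G * H * R) := by rw [hsum]
    _ = μ * Matrix.trace (D⁻¹ * (1 - B ^ (2 * N)) * R) := by
        rw [pow_mul, hinv, Matrix.smul_mul, Matrix.trace_smul, smul_eq_mul, Matrix.mul_assoc]
        ring
end

section
/- Let P be a real symmetric m×m matrix whose operator norm is strictly less than 1, let H be a real symmetric positive semidefinite M×M matrix, let n be a natural number, and let c ∈ ℝ^{mM}. Set Q = P ⊗ I_M and W = I_m ⊗ H, and define u = (I − Q)^{−1}(I − Q^{n+1}) c and v = Q (I − Q)^{−1}(I − Q^{n+1}) c. Then 0 ≤ ⟨v, W v⟩ ≤ ⟨u, W u⟩. -/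
open Matrix
open scoped Kronecker

private lemma kron_posSemidef {a b : ℕ} {A : Matrix (Fin a) (Fin a) ℝ}
    {B : Matrix (Fin b) (Fin b) ℝ} (hA : A.PosSemidef) (hB : B.PosSemidef) :
    (A ⊗ₖ B).PosSemidef := by
  obtain ⟨X, hX⟩ : ∃ X : Matrix (Fin a) (Fin a) ℝ, A = Xᴴ * X :=
    by open scoped MatrixOrder in
    exact CStarAlgebra.nonneg_iff_eq_star_mul_self.mp hA.nonneg
  obtain ⟨Y, hY⟩ : ∃ Y : Matrix (Fin b) (Fin b) ℝ, B = Yᴴ * Y :=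
    by open scoped MatrixOrder in
    exact CStarAlgebra.nonneg_iff_eq_star_mul_self.mp hB.nonneg
  have : A ⊗ₖ B = (X ⊗ₖ Y)ᴴ * (X ⊗ₖ Y) := by
    have hT : (X ⊗ₖ Y)ᴴ = Xᴴ ⊗ₖ Yᴴ := by
      ext ⟨i, k⟩ ⟨j, l⟩
      simp [Matrix.conjTranspose_apply, Matrix.kroneckerMap_apply]
    rw [hT, ← Matrix.mul_kronecker_mul, ← hX, ← hY]
  rw [this]
  exact Matrix.posSemidef_conjTranspose_mul_self _

private lemma one_sub_sq_posSemidef {m : ℕ} (P : Matrix (Fin m) (Fin m) ℝ)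
    (hPsym : P.IsSymm) (hPnorm : ‖Matrix.toEuclideanCLM (𝕜 := ℝ) P‖ < 1) :
    (1 - P * P).PosSemidef := by
  have hPh : P.IsHermitian := by
    unfold Matrix.IsHermitian
    ext i j
    simpa [Matrix.conjTranspose_apply] using congrFun (congrFun hPsym i) j
  refine Matrix.PosSemidef.of_dotProduct_mulVec_nonneg ?_ ?_
  · have : (P * P).IsHermitian := by
      unfold Matrix.IsHermitian
      rw [Matrix.conjTranspose_mul, hPh]
    exact (Matrix.isHermitian_one).sub this
  · intro x
    have hsx : star x = x := by simp
    rw [hsx, Matrix.sub_mulVec, dotProduct_sub, Matrix.one_mulVec]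
    rw [sub_nonneg]
    have key : x ⬝ᵥ (P * P) *ᵥ x = (P *ᵥ x) ⬝ᵥ (P *ᵥ x) := by
      rw [← Matrix.mulVec_mulVec, Matrix.dotProduct_mulVec]
      congr 1
      rw [← Matrix.mulVec_transpose, hPsym]
    rw [key]
    -- now show ‖Px‖² ≤ ‖x‖² using the operator norm bound
    set x' : EuclideanSpace ℝ (Fin m) := (WithLp.equiv 2 (Fin m → ℝ)).symm x with hx'
    set y' : EuclideanSpace ℝ (Fin m) := (WithLp.equiv 2 (Fin m → ℝ)).symm (P *ᵥ x) with hy'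
    have hdot : ∀ z : Fin m → ℝ,
        z ⬝ᵥ z = ‖(WithLp.equiv 2 (Fin m → ℝ)).symm z‖ ^ 2 := by
      intro z
      rw [← real_inner_self_eq_norm_sq]
      rw [EuclideanSpace.inner_eq_star_dotProduct]
      simp [PiLp.inner_apply, dotProduct, mul_comm]
    rw [hdot, hdot]
    have h1 : ‖y'‖ ≤ ‖Matrix.toEuclideanCLM (𝕜 := ℝ) P‖ * ‖x'‖ := by
      have h := (Matrix.toEuclideanCLM (𝕜 := ℝ) P).le_opNorm x'
      exact h
    have h2 : ‖Matrix.toEuclideanCLM (𝕜 := ℝ) P‖ * ‖x'‖ ≤ 1 * ‖x'‖ :=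
      mul_le_mul_of_nonneg_right (le_of_lt hPnorm) (norm_nonneg _)
    have h3 : ‖y'‖ ≤ ‖x'‖ := by linarith
    exact pow_le_pow_left₀ (norm_nonneg _) h3 2

/-- Comparison `f_dif(n) ≤ f_con(n)` between the heterogeneity-induced bias
terms of the diffusion and consensus strategies (Theorem 1): with
`Q = P ⊗ I_M`, `W = I_m ⊗ H`, `u = (I − Q)⁻¹(I − Q^{n+1}) c` and `v = Q u`,
one has `0 ≤ ⟨v, W v⟩ ≤ ⟨u, W u⟩`. -/
theorem diffusion_bias_le_consensus_bias
    (m M : ℕ) (P : Matrix (Fin m) (Fin m) ℝ) (hPsym : P.IsSymm)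
    (hPnorm : ‖Matrix.toEuclideanCLM (𝕜 := ℝ) P‖ < 1)
    (H : Matrix (Fin M) (Fin M) ℝ) (hH : H.PosSemidef)
    (n : ℕ) (c : Fin m × Fin M → ℝ)
    (Q : Matrix (Fin m × Fin M) (Fin m × Fin M) ℝ)
    (hQ : Q = P ⊗ₖ (1 : Matrix (Fin M) (Fin M) ℝ))
    (W : Matrix (Fin m × Fin M) (Fin m × Fin M) ℝ)
    (hW : W = (1 : Matrix (Fin m) (Fin m) ℝ) ⊗ₖ H)
    (u v : Fin m × Fin M → ℝ)
    (hu : u = ((1 - Q)⁻¹ * (1 - Q ^ (n + 1))).mulVec c)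
    (hv : v = (Q * (1 - Q)⁻¹ * (1 - Q ^ (n + 1))).mulVec c) :
    0 ≤ v ⬝ᵥ W.mulVec v ∧ v ⬝ᵥ W.mulVec v ≤ u ⬝ᵥ W.mulVec u := by
  have hWps : W.PosSemidef := by
    rw [hW]; exact kron_posSemidef (Matrix.PosSemidef.one) hH
  have hvQu : v = Q *ᵥ u := by
    rw [hv, hu, Matrix.mulVec_mulVec, mul_assoc]
  have hQsym : Qᵀ = Q := by
    rw [hQ, ← Matrix.kroneckerMap_transpose, hPsym, Matrix.transpose_one]
  have h1 : 0 ≤ v ⬝ᵥ W *ᵥ v := by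
    have := hWps.dotProduct_mulVec_nonneg v
    simpa using this
  refine ⟨h1, ?_⟩
  -- rewrite v-quadratic form in terms of u
  have hQu : Q *ᵥ u = u ᵥ* Q := by
    rw [← Matrix.mulVec_transpose, hQsym]
  have hvv : v ⬝ᵥ W *ᵥ v = u ⬝ᵥ (Q * W * Q) *ᵥ u := by
    rw [hvQu, Matrix.mulVec_mulVec, hQu, ← Matrix.dotProduct_mulVec,
      Matrix.mulVec_mulVec, ← mul_assoc]
  have e1 : (P ⊗ₖ (1 : Matrix (Fin M) (Fin M) ℝ)) * ((1 : Matrix (Fin m) (Fin m) ℝ) ⊗ₖ H)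
      = P ⊗ₖ H := by
    rw [← Matrix.mul_kronecker_mul, mul_one, one_mul]
  have e2 : (P ⊗ₖ H) * (P ⊗ₖ (1 : Matrix (Fin M) (Fin M) ℝ)) = (P * P) ⊗ₖ H := by
    rw [← Matrix.mul_kronecker_mul, mul_one]
  have hkey : W - Q * W * Q = (1 - P * P) ⊗ₖ H := by
    rw [hQ, hW, e1, e2]
    ext ⟨i, k⟩ ⟨j, l⟩
    simp [Matrix.kroneckerMap_apply, Matrix.sub_apply, sub_mul]
  have hps : ((1 - P * P) ⊗ₖ H).PosSemidef :=
    kron_posSemidef (one_sub_sq_posSemidef P hPsym hPnorm) hH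
  have h2 : 0 ≤ u ⬝ᵥ ((1 - P * P) ⊗ₖ H) *ᵥ u := by
    have := hps.dotProduct_mulVec_nonneg u
    simpa using this
  rw [← hkey, Matrix.sub_mulVec, dotProduct_sub, ← hvv] at h2
  linarith
end
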